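/- For any positive integers n ≥ m, in the free ℤ-module on words over {A,B} one has Σ_{k=1−n}^{n} (−1)^k k^(2m−1) · [(AB)^(n−k) ⧢ (AB)^(n−1+k)] = Σ_{j=1}^{m} 4^(n−j) · a_{2m−1,j} · T_{2n−1,n−j}, where a_{2m−1,j} = Σ_{k=1−j}^{j} (−1)^k k^(2m−1) binom(2j−1, j−k). -/
import Mathlib


/-- Words over the two-letter alphabet `{A, B}`, encoded as lists of booleans
with `A = true` and `B = false`. -/
abbrev Word := List Bool

/-- The list of all shuffles (interleavings) of two lists, with multiplicity. -/
def listShuffles {α : Type*} : List α → List α → List (List α)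
  | [], v => [v]
  | u, [] => [u]
  | a :: u, b :: v =>
      ((listShuffles u (b :: v)).map (a :: ·)) ++ ((listShuffles (a :: u) v).map (b :: ·))

/-- The shuffle product `u ⧢ v` of two words, as an element of the free
ℤ-module on words (each interleaving counted with multiplicity). -/
noncomputable def wordShuffle (u v : Word) : Word →₀ ℤ :=
  ((listShuffles u v).map fun w => Finsupp.single w (1 : ℤ)).sum

/-- The word `(AB)^p = ABAB⋯AB` with `p` copies of `AB`. -/
def ABpow (p : ℕ) : Word := List.flatten (List.replicate p [true, false])

/-- The number of occurrences of the subword `AA` in a word, i.e. the number of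
indices `i` such that positions `i` and `i+1` both hold the letter `A`. -/
def countAA (w : Word) : ℕ := (w.zip w.tail).count (true, true)

/-- `T_{N,j}` for `0 ≤ j ≤ ⌊N/2⌋`: the formal sum, each with coefficient 1, of
the distinct words containing `AA` exactly `j` times that occur with nonzero
multiplicity in `(AB)^p ⧢ (AB)^q` for any `p + q = N` with `min(p,q) ≥ j`;
this set of words depends only on `N = p + q` and `j`, so we take `p = j`,
`q = N − j`. -/
noncomputable def T (N j : ℕ) : Word →₀ ℤ :=
  ∑ w ∈ (wordShuffle (ABpow j) (ABpow (N - j))).support.filter (fun w => countAA w = j),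
    Finsupp.single w (1 : ℤ)

/- ### auxiliary definitions -/

/-- height-validity: heights stay in `[0,2]`, start at `h`, end at `0`. -/
def valid : ℕ → Word → Bool
  | h, [] => h == 0
  | h, true :: w => if h ≤ 1 then valid (h+1) w else false
  | h, false :: w => if 1 ≤ h then valid (h-1) w else false

@[simp] lemma valid_nil (h : ℕ) : valid h [] = (h == 0) := rfl
@[simp] lemma valid_true (h : ℕ) (w : Word) :
    valid h (true :: w) = if h ≤ 1 then valid (h+1) w else false := rfl
@[simp] lemma valid_false (h : ℕ) (w : Word) :
    valid h (false :: w) = if 1 ≤ h then valid (h-1) w else false := rfl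

@[simp] lemma countAA_nil : countAA [] = 0 := rfl
@[simp] lemma countAA_singleton (c : Bool) : countAA [c] = 0 := rfl
@[simp] lemma countAA_cons_cons (c d : Bool) (w : Word) :
    countAA (c :: d :: w) = (if c = true ∧ d = true then 1 else 0) + countAA (d :: w) := by
  simp only [countAA, List.tail_cons, List.zip_cons_cons, List.count_cons]
  rcases c <;> rcases d <;> simp [add_comm]

/-- closed form for the coefficient of `w` in `(ab)^p ⧢ (ab)^q`. -/
def fX (w : Word) (p q : ℕ) : ℕ :=
  if valid 0 w ∧ w.length = 2*(p+q) ∧ countAA w ≤ p ∧ countAA w ≤ q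
  then 4^(countAA w) * Nat.choose (p+q-2*countAA w) (p - countAA w) else 0

/-- closed form for the coefficient of `w` in `b(ab)^p ⧢ (ab)^q`. -/
def fY (w : Word) (p q : ℕ) : ℕ :=
  if valid 1 w ∧ w.length = 2*(p+q)+1 then
    if w.head? = some false then
      (if countAA w ≤ p ∧ countAA w ≤ q
       then 4^(countAA w) * Nat.choose (p+q-2*countAA w) (p - countAA w) else 0)
    else
      (if countAA w + 1 ≤ q ∧ countAA w ≤ p
       then 2 * 4^(countAA w) * Nat.choose (p+q-2*countAA w-1) (q - countAA w - 1) else 0)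
  else 0

/-- closed form for the coefficient of `w` in `b(ab)^p ⧢ b(ab)^q`. -/
def fZ (w : Word) (p q : ℕ) : ℕ :=
  if valid 2 w ∧ w.length = 2*(p+q)+2 ∧ countAA w ≤ p ∧ countAA w ≤ q
  then 2 * 4^(countAA w) * Nat.choose (p+q-2*countAA w) (p - countAA w) else 0

/- ### basic list lemmas -/

lemma count_map_cons {α : Type*} [DecidableEq α] (x c : α) (w : List α) (L : List (List α)) :
    (L.map (x :: ·)).count (c :: w) = if x = c then L.count w else 0 := by
  induction L with
  | nil => simp
  | cons a L ih =>
    simp only [List.map_cons, List.count_cons, ih, List.cons_eq_cons]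
    by_cases h : x = c <;> by_cases h2 : a = w <;> simp [h, h2]

lemma count_map_cons_nil {α : Type*} [DecidableEq α] (x : α) (L : List (List α)) :
    (L.map (x :: ·)).count [] = 0 := by
  rw [List.count_eq_zero]
  simp

@[simp] lemma listShuffles_nil_left {α : Type*} (v : List α) : listShuffles [] v = [v] := by
  cases v <;> simp [listShuffles]

@[simp] lemma listShuffles_nil_right {α : Type*} (u : List α) : listShuffles u [] = [u] := by
  cases u <;> simp [listShuffles]

lemma listShuffles_cons_cons {α : Type*} (a b : α) (u v : List α) :
    listShuffles (a :: u) (b :: v) =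
      ((listShuffles u (b :: v)).map (a :: ·)) ++ ((listShuffles (a :: u) v).map (b :: ·)) := by
  simp [listShuffles]

lemma length_mem_listShuffles {α : Type*} :
    ∀ (u v w : List α), w ∈ listShuffles u v → w.length = u.length + v.length := by
  intro u
  induction u with
  | nil => intro v w hw; simp_all
  | cons a u ihu =>
    intro v
    induction v with
    | nil => intro w hw; simp_all
    | cons b v ihv =>
      intro w hw
      rw [listShuffles_cons_cons, List.mem_append] at hw
      rcases hw with hw | hw
      · obtain ⟨x, hx, rfl⟩ := List.mem_map.1 hw
        have := ihu (b :: v) x hx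
        simp at this ⊢; omega
      · obtain ⟨x, hx, rfl⟩ := List.mem_map.1 hw
        have := ihv x hx
        simp at this ⊢; omega

lemma count_listShuffles_comm {α : Type*} [DecidableEq α] :
    ∀ (n : ℕ) (u v w : List α), u.length + v.length ≤ n →
      (listShuffles u v).count w = (listShuffles v u).count w := by
  intro n
  induction n with
  | zero =>
    intro u v w h
    have hu : u = [] := by cases u <;> simp_all
    have hv : v = [] := by cases v <;> simp_all
    subst hu; subst hv; rfl
  | succ n ih =>
    intro u v w h
    match u, v with
    | [], v => simp
    | a :: u, [] => simp
    | a :: u, b :: v =>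
      rw [listShuffles_cons_cons, listShuffles_cons_cons, List.count_append, List.count_append]
      cases w with
      | nil => simp [count_map_cons_nil]
      | cons c w =>
        rw [count_map_cons, count_map_cons, count_map_cons, count_map_cons]
        simp only [List.length_cons] at h
        rw [ih u (b :: v) w (by simp; omega), ih (a :: u) v w (by simp; omega)]
        omega

/- ### ABpow facts -/

lemma ABpow_succ (p : ℕ) : ABpow (p+1) = true :: false :: ABpow p := by
  simp [ABpow, List.replicate_succ]

@[simp] lemma ABpow_zero : ABpow 0 = [] := rfl

@[simp] lemma length_ABpow (p : ℕ) : (ABpow p).length = 2*p := by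
  induction p with
  | zero => rfl
  | succ p ih => rw [ABpow_succ]; simp [ih]; omega

@[simp] lemma countAA_ABpow (p : ℕ) : countAA (ABpow p) = 0 := by
  induction p with
  | zero => rfl
  | succ p ih =>
    rw [ABpow_succ]
    cases hp : ABpow p with
    | nil => simp
    | cons c w => rw [hp] at ih; simp [ih]

@[simp] lemma valid_zero_ABpow (p : ℕ) : valid 0 (ABpow p) = true := by
  induction p with
  | zero => rfl
  | succ p ih => rw [ABpow_succ]; simp [ih]

lemma valid2_head : ∀ w : Word, valid 2 w → w.head? = some false := by
  intro w hw
  match w with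
  | [] => simp at hw
  | true :: w => simp at hw
  | false :: w => rfl

/- ### capacity lemmas -/

lemma caps : ∀ w : Word,
    (valid 0 w → 4 * countAA w ≤ w.length) ∧
    (valid 1 w → (w.head? = some true → 4 * countAA w + 3 ≤ w.length) ∧
      4 * countAA w + 1 ≤ w.length) ∧
    (valid 2 w → 4 * countAA w + 2 ≤ w.length) := by
  intro w
  induction w with
  | nil => simp
  | cons c w ih =>
    obtain ⟨ih0, ih1, ih2⟩ := ih
    rcases c with _ | _
    · -- c = false
      refine ⟨by simp, ?_, ?_⟩
      · intro hv
        simp at hv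
        have h0 := ih0 hv
        have hc : countAA (false :: w) = countAA w := by
          cases w with
          | nil => simp
          | cons d r => simp
        constructor
        · intro h; simp at h
        · simp [hc]; omega
      · intro hv
        simp at hv
        have h1 := (ih1 hv).2
        have hc : countAA (false :: w) = countAA w := by
          cases w with
          | nil => simp
          | cons d r => simp
        simp [hc]; omega
    · -- c = true
      refine ⟨?_, ?_, by simp⟩
      · intro hv
        simp at hv
        obtain ⟨h1a, h1b⟩ := ih1 hv
        cases hw : w.head? with
        | none =>
          have : w = [] := by cases w <;> simp_all
          subst this; simp at hv
        | some d =>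
          rcases d with _ | _
          · have hc : countAA (true :: w) = countAA w := by
              cases w with
              | nil => simp
              | cons e r => simp at hw; subst hw; simp
            simp [hc, List.length_cons]; omega
          · have hc : countAA (true :: w) = countAA w + 1 := by
              cases w with
              | nil => simp at hw
              | cons e r => simp at hw; subst hw; simp [add_comm]
            have := h1a hw
            simp [hc, List.length_cons]; omega
      · intro hv
        simp at hv
        have h2 := ih2 hv
        have hhd := valid2_head w hv
        have hc : countAA (true :: w) = countAA w := by
          cases w with
          | nil => simp at hhd
          | cons e r => simp at hhd; subst hhd; simp
        constructor
        · intro _; simp [hc, List.length_cons]; omega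
        · simp [hc, List.length_cons]; omega

/- ### uniqueness of AA-free valid words -/

lemma unique_valid0 : ∀ (q : ℕ) (w : Word), valid 0 w → countAA w = 0 →
    w.length = 2*q → w = ABpow q := by
  intro q
  induction q with
  | zero => intro w _ _ hl; simpa using List.length_eq_zero_iff.1 (by simpa using hl)
  | succ q ih =>
    intro w hv hc hl
    match w, hv with
    | true :: w', hv =>
      match w', hv with
      | true :: r, hv => simp at hc
      | false :: r, hv =>
        simp at hv hc hl
        rw [ABpow_succ, ih r hv (by cases r <;> simp_all) (by omega)]
    | false :: w', hv => simp at hv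
    | [], hv => simp at hl

/- ### micro simp lemmas -/

@[simp] lemma valid0_true_cons (w : Word) : valid 0 (true :: w) = valid 1 w := by simp
@[simp] lemma valid0_false_cons (w : Word) : valid 0 (false :: w) = false := by simp
@[simp] lemma valid1_false_cons (w : Word) : valid 1 (false :: w) = valid 0 w := by simp
@[simp] lemma valid1_true_cons (w : Word) : valid 1 (true :: w) = valid 2 w := by simp
@[simp] lemma valid2_false_cons (w : Word) : valid 2 (false :: w) = valid 1 w := by simp
@[simp] lemma valid2_true_cons (w : Word) : valid 2 (true :: w) = false := by simp

@[simp] lemma countAA_false_cons (w : Word) : countAA (false :: w) = countAA w := by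
  cases w <;> simp

lemma countAA_true_cons (w : Word) :
    countAA (true :: w) = countAA w + (if w.head? = some true then 1 else 0) := by
  cases w with
  | nil => simp
  | cons d r => cases d <;> simp [add_comm]

lemma csym {n a b : ℕ} (h : a + b = n) : n.choose a = n.choose b := by
  subst h
  have := Nat.choose_symm (show b ≤ a + b by omega)
  simpa [show a + b - b = a by omega] using this

/- ### evaluation helpers for f-functions -/

lemma fX_zero {w : Word} {p q : ℕ} (h : ¬(valid 0 w = true ∧ w.length = 2*(p+q))) :
    fX w p q = 0 := by rw [fX, if_neg]; tauto

lemma fY_zero {w : Word} {p q : ℕ} (h : ¬(valid 1 w = true ∧ w.length = 2*(p+q)+1)) :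
    fY w p q = 0 := by rw [fY, if_neg]; tauto

lemma fZ_zero {w : Word} {p q : ℕ} (h : ¬(valid 2 w = true ∧ w.length = 2*(p+q)+2)) :
    fZ w p q = 0 := by rw [fZ, if_neg]; tauto

lemma fX_eq {w : Word} {p q : ℕ} (hv : valid 0 w = true) (hl : w.length = 2*(p+q)) :
    fX w p q = if countAA w ≤ p ∧ countAA w ≤ q
      then 4^(countAA w) * Nat.choose (p+q-2*countAA w) (p - countAA w) else 0 := by
  rw [fX]
  by_cases h : countAA w ≤ p ∧ countAA w ≤ q
  · rw [if_pos ⟨hv, hl, h.1, h.2⟩, if_pos h]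
  · rw [if_neg (by tauto), if_neg h]
  
lemma fY_eq_b {w : Word} {p q : ℕ} (hv : valid 1 w = true) (hl : w.length = 2*(p+q)+1)
    (hh : w.head? = some false) :
    fY w p q = if countAA w ≤ p ∧ countAA w ≤ q
      then 4^(countAA w) * Nat.choose (p+q-2*countAA w) (p - countAA w) else 0 := by
  simp [fY, hv, hl, hh]

lemma fY_eq_a {w : Word} {p q : ℕ} (hv : valid 1 w = true) (hl : w.length = 2*(p+q)+1)
    (hh : w.head? = some true) :
    fY w p q = if countAA w + 1 ≤ q ∧ countAA w ≤ p
      then 2 * 4^(countAA w) * Nat.choose (p+q-2*countAA w-1) (q - countAA w - 1) else 0 := by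
  simp [fY, hv, hl, hh]

lemma fZ_eq {w : Word} {p q : ℕ} (hv : valid 2 w = true) (hl : w.length = 2*(p+q)+2) :
    fZ w p q = if countAA w ≤ p ∧ countAA w ≤ q
      then 2 * 4^(countAA w) * Nat.choose (p+q-2*countAA w) (p - countAA w) else 0 := by
  rw [fZ]
  by_cases h : countAA w ≤ p ∧ countAA w ≤ q
  · rw [if_pos ⟨hv, hl, h.1, h.2⟩, if_pos h]
  · rw [if_neg (by tauto), if_neg h]

/- ### transfer identities -/

lemma idA (w : Word) (p q : ℕ) :
    fX (true :: w) (p+1) (q+1) = fY w p (q+1) + fY w q (p+1) := by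
  by_cases hv : valid 1 w
  case neg =>
    rw [fX_zero (by simp [hv]), fY_zero (by simp [hv]), fY_zero (by simp [hv])]
  by_cases hl : w.length = 2*(p+q)+3
  case neg =>
    rw [fX_zero (by simp; omega), fY_zero (by simp; omega), fY_zero (by simp; omega)]
  have h1 : (true :: w).length = 2*((p+1)+(q+1)) := by simp; omega
  have h2 : w.length = 2*(p+(q+1))+1 := by omega
  have h3 : w.length = 2*(q+(p+1))+1 := by omega
  have hv0 : valid 0 (true :: w) = true := by simp [hv]
  cases w with
  | nil => simp at hl
  | cons d w' =>
    rw [fX_eq hv0 h1]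
    cases d with
    | false =>
      rw [fY_eq_b hv h2 (by rfl), fY_eq_b hv h3 (by rfl)]
      have hcnt : countAA (true :: false :: w') = countAA (false :: w') := by
        rw [countAA_true_cons]; rfl
      rw [hcnt]
      set j := countAA (false :: w') with hj
      have hcap : 4 * j + 1 ≤ 2*(p+q)+3 := by
        have := ((caps (false :: w')).2.1 hv).2
        omega
      by_cases hp : j ≤ p <;> by_cases hq : j ≤ q
      · rw [if_pos (by omega), if_pos (by omega), if_pos (by omega)]
        have e1 : p+1+(q+1)-2*j = (p+(q+1)-2*j) + 1 := by omega
        have e2 : p+1-j = (p-j)+1 := by omega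
        have e3 : (q+(p+1)-2*j).choose (q-j) = (p+(q+1)-2*j).choose ((p-j)+1) := by
          rw [show q+(p+1)-2*j = p+(q+1)-2*j by omega]
          exact csym (by omega)
        rw [e1, e2, Nat.choose_succ_succ, e3]
        ring
      · -- j ≤ p, q < j : nonzero only if j = q+1
        by_cases hq1 : j ≤ q + 1
        · rw [if_pos (by omega), if_pos (by omega), if_neg (by omega)]
          have e1 : (p+1+(q+1)-2*j).choose (p+1-j) = 1 := by
            rw [show p+1-j = p+1+(q+1)-2*j by omega]; exact Nat.choose_self _
          have e2 : (p+(q+1)-2*j).choose (p-j) = 1 := by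
            rw [show p-j = p+(q+1)-2*j by omega]; exact Nat.choose_self _
          rw [e1, e2] <;> ring
        · rw [if_neg (by omega), if_neg (by omega), if_neg (by omega)] <;> ring
      · -- j ≤ q, p < j : nonzero only if j = p+1
        by_cases hp1 : j ≤ p + 1
        · rw [if_pos (by omega), if_neg (by omega), if_pos (by omega)]
          have e1 : (p+1+(q+1)-2*j).choose (p+1-j) = 1 := by
            rw [show p+1-j = 0 by omega]; exact Nat.choose_zero_right _
          have e2 : (q+(p+1)-2*j).choose (q-j) = 1 := by
            rw [show q-j = q+(p+1)-2*j by omega]; exact Nat.choose_self _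
          rw [e1, e2] <;> ring
        · rw [if_neg (by omega), if_neg (by omega), if_neg (by omega)] <;> ring
      · -- p < j, q < j : either all indicators fail, or j = p+1 = q+1 excluded by capacity
        by_cases hb : j ≤ p+1 ∧ j ≤ q+1
        · exfalso; omega
        · rw [if_neg (by tauto), if_neg (by omega), if_neg (by omega)] <;> ring
    | true =>
      rw [fY_eq_a hv h2 (by rfl), fY_eq_a hv h3 (by rfl)]
      have hcnt : countAA (true :: true :: w') = countAA (true :: w') + 1 := by
        rw [countAA_true_cons]; rfl
      rw [hcnt]
      set j := countAA (true :: w') with hj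
      by_cases hp : j ≤ p <;> by_cases hq : j ≤ q
      · rw [if_pos (by omega), if_pos (by omega), if_pos (by omega)]
        have e1 : p+1+(q+1)-2*(j+1) = p+q-2*j := by omega
        have e2 : p+1-(j+1) = p-j := by omega
        have e3 : p+(q+1)-2*j-1 = p+q-2*j := by omega
        have e4 : q+1-j-1 = q-j := by omega
        have e5 : q+(p+1)-2*j-1 = p+q-2*j := by omega
        have e6 : p+1-j-1 = p-j := by omega
        have e7 : (p+q-2*j).choose (q-j) = (p+q-2*j).choose (p-j) := csym (by omega)
        rw [e1, e2, e3, e4, e5, e6, e7]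
        ring
      · rw [if_neg (by omega), if_neg (by omega), if_neg (by omega)] <;> ring
      · rw [if_neg (by omega), if_neg (by omega), if_neg (by omega)] <;> ring
      · rw [if_neg (by omega), if_neg (by omega), if_neg (by omega)] <;> ring

lemma idB0 (w : Word) (p q : ℕ) : fY (false :: w) p q = fX w p q := by
  by_cases hv : valid 0 w
  case neg =>
    rw [fY_zero (by simp [hv]), fX_zero (by simp [hv])]
  by_cases hl : w.length = 2*(p+q)
  case neg =>
    rw [fY_zero (by simp; omega), fX_zero (by simp; omega)]
  rw [fY_eq_b (by simp [hv]) (by simp; omega) (by rfl), fX_eq hv hl, countAA_false_cons]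

lemma idB (w : Word) (p q : ℕ) : fY (true :: w) p (q+1) = fZ w p q := by
  by_cases hv : valid 2 w
  case neg =>
    rw [fY_zero (by simp [hv]), fZ_zero (by simp [hv])]
  by_cases hl : w.length = 2*(p+q)+2
  case neg =>
    rw [fY_zero (by simp; omega), fZ_zero (by simp; omega)]
  have hhd := valid2_head w hv
  rw [fY_eq_a (by simp [hv]) (by simp; omega) (by rfl), fZ_eq hv hl]
  have hcnt : countAA (true :: w) = countAA w := by
    rw [countAA_true_cons, hhd]; simp
  rw [hcnt]
  set j := countAA w with hj
  by_cases hp : j ≤ p <;> by_cases hq : j ≤ q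
  · rw [if_pos (by omega), if_pos (by omega)]
    have e1 : p+(q+1)-2*j-1 = p+q-2*j := by omega
    have e2 : q+1-j-1 = q-j := by omega
    have e3 : (p+q-2*j).choose (q-j) = (p+q-2*j).choose (p-j) := csym (by omega)
    rw [e1, e2, e3]
  · rw [if_neg (by omega), if_neg (by omega)]
  · rw [if_neg (by omega), if_neg (by omega)]
  · rw [if_neg (by omega), if_neg (by omega)]

lemma idC (w : Word) (p q : ℕ) : fZ (false :: w) p q = fY w q p + fY w p q := by
  by_cases hv : valid 1 w
  case neg =>
    rw [fZ_zero (by simp [hv]), fY_zero (by simp [hv]), fY_zero (by simp [hv])]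
  by_cases hl : w.length = 2*(p+q)+1
  case neg =>
    rw [fZ_zero (by simp; omega), fY_zero (by simp; omega), fY_zero (by simp; omega)]
  have h2 : (false :: w).length = 2*(p+q)+2 := by simp; omega
  have h3 : w.length = 2*(q+p)+1 := by omega
  have hv2 : valid 2 (false :: w) = true := by simp [hv]
  cases w with
  | nil => simp at hl
  | cons d w' =>
    rw [fZ_eq hv2 h2, countAA_false_cons]
    cases d with
    | false =>
      rw [fY_eq_b hv h3 (by rfl), fY_eq_b hv hl (by rfl)]
      set j := countAA (false :: w') with hj
      by_cases hp : j ≤ p <;> by_cases hq : j ≤ q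
      · rw [if_pos (by omega), if_pos (by omega), if_pos (by omega)]
        have e1 : q+p-2*j = p+q-2*j := by omega
        have e2 : (p+q-2*j).choose (q-j) = (p+q-2*j).choose (p-j) := csym (by omega)
        rw [e1, e2] <;> ring
      · rw [if_neg (by omega), if_neg (by omega), if_neg (by omega)] <;> ring
      · rw [if_neg (by omega), if_neg (by omega), if_neg (by omega)] <;> ring
      · rw [if_neg (by omega), if_neg (by omega), if_neg (by omega)] <;> ring
    | true =>
      rw [fY_eq_a hv h3 (by rfl), fY_eq_a hv hl (by rfl)]
      set j := countAA (true :: w') with hj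
      have hcap : 4 * j + 3 ≤ 2*(p+q)+2 := by
        have h := ((caps (true :: w')).2.1 hv).1 (by rfl)
        simp only [List.length_cons] at h hl
        omega
      by_cases hp : j ≤ p <;> by_cases hq : j ≤ q
      · by_cases hp1 : j + 1 ≤ p <;> by_cases hq1 : j + 1 ≤ q
        · rw [if_pos (by omega), if_pos (by omega), if_pos (by omega)]
          rw [show q+p-2*j-1 = p+q-2*j-1 from by omega]
          set D := p+q-2*j-1 with hD
          set P := p-j-1 with hP
          rw [show p+q-2*j = D+1 from by omega, show p-j = P+1 from by omega,
            Nat.choose_succ_succ,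
            show D.choose (q-j-1) = D.choose (P+1) from csym (by omega)]
          ring
        · rw [if_pos (by omega), if_pos (by omega), if_neg (by omega)]
          have e1 : (p+q-2*j).choose (p-j) = 1 := by
            rw [show p-j = p+q-2*j by omega]; exact Nat.choose_self _
          have e2 : (q+p-2*j-1).choose (p-j-1) = 1 := by
            rw [show p-j-1 = q+p-2*j-1 by omega]; exact Nat.choose_self _
          rw [e1, e2] <;> ring
        · rw [if_pos (by omega), if_neg (by omega), if_pos (by omega)]
          have e1 : (p+q-2*j).choose (p-j) = 1 := by
            rw [show p-j = 0 by omega]; exact Nat.choose_zero_right _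
          have e2 : (p+q-2*j-1).choose (q-j-1) = 1 := by
            rw [show q-j-1 = p+q-2*j-1 by omega]; exact Nat.choose_self _
          rw [e1, e2] <;> ring
        · omega
      · rw [if_neg (by omega), if_neg (by omega), if_neg (by omega)] <;> ring
      · rw [if_neg (by omega), if_neg (by omega), if_neg (by omega)] <;> ring
      · rw [if_neg (by omega), if_neg (by omega), if_neg (by omega)] <;> ring

/- ### singleton evaluations -/

lemma count_singleton_list (a b : Word) : [b].count a = if b = a then 1 else 0 := by
  simp [List.count_cons]

lemma fX_single_left (r : ℕ) (w : Word) : fX w 0 r = if ABpow r = w then 1 else 0 := by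
  by_cases h : ABpow r = w
  · rw [if_pos h, ← h, fX]
    rw [if_pos ⟨valid_zero_ABpow r, by simp, by simp, by simp⟩]
    simp
  · rw [if_neg h, fX, if_neg]
    rintro ⟨h1, h2, h3, h4⟩
    exact h (unique_valid0 r w h1 (by omega) (by omega)).symm

lemma fX_single_right (r : ℕ) (w : Word) : fX w r 0 = if ABpow r = w then 1 else 0 := by
  by_cases h : ABpow r = w
  · rw [if_pos h, ← h, fX]
    rw [if_pos ⟨valid_zero_ABpow r, by simp, by simp, by simp⟩]
    simp
  · rw [if_neg h, fX, if_neg]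
    rintro ⟨h1, h2, h3, h4⟩
    exact h (unique_valid0 r w h1 (by omega) (by omega)).symm

lemma fY_single (p : ℕ) (w : Word) : fY w p 0 = if false :: ABpow p = w then 1 else 0 := by
  cases w with
  | nil => rw [fY_zero (by simp)]; simp
  | cons c w' =>
    cases c with
    | false =>
      rw [idB0, fX_single_right]
      simp [List.cons_eq_cons]
    | true =>
      rw [if_neg (by simp), fY]
      by_cases hC : valid 1 (true::w') = true ∧ (true::w').length = 2*(p+0)+1
      · rw [if_pos hC, if_neg (by simp), if_neg (by omega)]
      · rw [if_neg hC]

/- ### the main counting lemma -/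

lemma count_listShuffles_length {u v w : Word} (h : w.length ≠ u.length + v.length) :
    (listShuffles u v).count w = 0 :=
  List.count_eq_zero.mpr fun hm => h (length_mem_listShuffles u v w hm)

lemma count_ls_comm (u v w : Word) :
    (listShuffles u v).count w = (listShuffles v u).count w :=
  count_listShuffles_comm (u.length + v.length) u v w le_rfl

lemma mainCount : ∀ (w : Word) (p q : ℕ),
    ((listShuffles (ABpow p) (ABpow q)).count w = fX w p q) ∧
    ((listShuffles (false :: ABpow p) (ABpow q)).count w = fY w p q) ∧
    ((listShuffles (false :: ABpow p) (false :: ABpow q)).count w = fZ w p q) := by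
  intro w
  induction w with
  | nil =>
    intro p q
    refine ⟨?_, ?_, ?_⟩
    · rcases Nat.eq_zero_or_pos (p + q) with h | h
      · have hp : p = 0 := by omega
        have hq : q = 0 := by omega
        subst hp; subst hq
        simp [fX]
      · exact (count_listShuffles_length (by simp; omega)).trans
          (fX_zero (by simp; omega)).symm
    · exact (count_listShuffles_length (by simp; omega)).trans
        (fY_zero (by simp)).symm
    · exact (count_listShuffles_length (by simp)).trans
        (fZ_zero (by simp)).symm
  | cons c w ih =>
    intro p q
    refine ⟨?_, ?_, ?_⟩
    · -- X case
      cases p with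
      | zero =>
        rw [show ABpow 0 = [] from rfl, listShuffles_nil_left, count_singleton_list,
          fX_single_left]
      | succ p =>
        cases q with
        | zero =>
          rw [show ABpow 0 = [] from rfl, listShuffles_nil_right, count_singleton_list,
            fX_single_right]
        | succ q =>
          rw [ABpow_succ p, ABpow_succ q, listShuffles_cons_cons, List.count_append]
          cases c with
          | true =>
            rw [count_map_cons, count_map_cons, if_pos rfl, if_pos rfl]
            rw [show (true :: false :: ABpow q) = ABpow (q+1) from (ABpow_succ q).symm]
            rw [count_ls_comm (true :: false :: ABpow p) (false :: ABpow q)]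
            rw [show (true :: false :: ABpow p) = ABpow (p+1) from (ABpow_succ p).symm]
            rw [(ih p (q+1)).2.1, (ih q (p+1)).2.1, idA]
          | false =>
            rw [count_map_cons, count_map_cons, if_neg (by simp), if_neg (by simp)]
            exact (Nat.zero_add 0).trans (fX_zero (by simp)).symm
    · -- Y case
      cases q with
      | zero =>
        rw [show ABpow 0 = [] from rfl, listShuffles_nil_right, count_singleton_list,
          fY_single]
      | succ q =>
        rw [ABpow_succ q, listShuffles_cons_cons, List.count_append,
          count_map_cons, count_map_cons]
        cases c with
        | false =>
          rw [if_pos rfl, if_neg (by simp)]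
          rw [show (true :: false :: ABpow q) = ABpow (q+1) from (ABpow_succ q).symm]
          rw [(ih p (q+1)).1, idB0]
          omega
        | true =>
          rw [if_neg (by simp), if_pos rfl]
          rw [(ih p q).2.2, idB]
          omega
    · -- Z case
      rw [listShuffles_cons_cons, List.count_append, count_map_cons, count_map_cons]
      cases c with
      | true =>
        rw [if_neg (by simp), if_neg (by simp)]
        exact (Nat.zero_add 0).trans (fZ_zero (by simp)).symm
      | false =>
        rw [if_pos rfl, if_pos rfl]
        rw [count_ls_comm (ABpow p) (false :: ABpow q)]
        rw [(ih q p).2.1, (ih p q).2.1, idC]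

/- ### alternating binomial sums annihilate low-degree polynomials -/

open Polynomial in
lemma alt_sum_poly : ∀ (n : ℕ) (P : Polynomial ℤ), P.natDegree < n →
    ∑ s ∈ Finset.range (n+1), (-1 : ℤ)^s * (n.choose s) * P.eval (s : ℤ) = 0 := by
  intro n
  induction n with
  | zero => intro P hP; exact absurd hP (Nat.not_lt_zero _)
  | succ n ih =>
    intro P hP
    set Q : Polynomial ℤ := P - P.comp (X + C 1) with hQ
    have hQeval : ∀ s : ℤ, Q.eval s = P.eval s - P.eval (s+1) := by
      intro s; simp [hQ]
    have step : ∑ s ∈ Finset.range (n+2), (-1 : ℤ)^s * ((n+1).choose s) * P.eval (s : ℤ)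
        = ∑ s ∈ Finset.range (n+1), (-1 : ℤ)^s * (n.choose s) * Q.eval (s : ℤ) := by
      rw [Finset.sum_range_succ' _ (n+1)]
      have e1 : ∀ i : ℕ, (-1 : ℤ)^(i+1) * (((n+1).choose (i+1) : ℕ) : ℤ) * P.eval ((i+1 : ℕ) : ℤ)
          = -((-1:ℤ)^i * (n.choose i) * P.eval ((i:ℤ)+1))
            - (-1:ℤ)^i * (n.choose (i+1)) * P.eval ((i:ℤ)+1) := by
        intro i
        rw [Nat.choose_succ_succ]
        push_cast
        ring
      rw [Finset.sum_congr rfl (fun i _ => e1 i)]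
      rw [Finset.sum_sub_distrib]
      have e2 : ∑ i ∈ Finset.range (n+1), (-1:ℤ)^i * (n.choose (i+1)) * P.eval ((i:ℤ)+1)
          = ∑ i ∈ Finset.range n, (-1:ℤ)^i * (n.choose (i+1)) * P.eval ((i:ℤ)+1) := by
        rw [Finset.sum_range_succ, Nat.choose_succ_self]
        simp
      have e3 : ∑ s ∈ Finset.range (n+1), (-1 : ℤ)^s * (n.choose s) * P.eval ((s : ℕ) : ℤ)
          = ∑ i ∈ Finset.range n, (-1:ℤ)^(i+1) * (n.choose (i+1)) * P.eval ((i:ℤ)+1)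
            + P.eval 0 := by
        rw [Finset.sum_range_succ' _ n]
        push_cast
        simp
      have e4 : ∑ s ∈ Finset.range (n+1), (-1 : ℤ)^s * (n.choose s) * Q.eval (s : ℤ)
          = ∑ s ∈ Finset.range (n+1), ((-1 : ℤ)^s * (n.choose s) * P.eval (s : ℤ)
            - (-1 : ℤ)^s * (n.choose s) * P.eval ((s : ℤ)+1)) := by
        refine Finset.sum_congr rfl fun s _ => ?_
        rw [hQeval]; ring
      rw [e4, Finset.sum_sub_distrib, e3, e2]
      push_cast
      have e5 : ∑ i ∈ Finset.range n, (-1:ℤ)^(i+1) * (n.choose (i+1)) * P.eval ((i:ℤ)+1)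
          = - ∑ i ∈ Finset.range n, (-1:ℤ)^i * (n.choose (i+1)) * P.eval ((i:ℤ)+1) := by
        rw [← Finset.sum_neg_distrib]
        refine Finset.sum_congr rfl fun s _ => by ring
      rw [e5, Finset.sum_neg_distrib]
      simp only [Nat.choose_zero_right, Nat.cast_one]
      ring
    rw [step]
    rcases Nat.lt_or_ge P.natDegree n with hlt | hge
    · -- degree of Q is < n by subadditivity
      refine ih Q ?_
      have h1 : (P.comp (X + C 1)).natDegree = P.natDegree := by
        rw [Polynomial.natDegree_comp, Polynomial.natDegree_X_add_C, mul_one]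
      calc Q.natDegree ≤ max P.natDegree (P.comp (X + C 1)).natDegree :=
            Polynomial.natDegree_sub_le _ _
        _ < n := by rw [h1]; omega
    · have heq : P.natDegree = n := by omega
      rcases Nat.eq_zero_or_pos n with hn | hn
      · -- P is constant
        subst hn
        obtain ⟨a, rfl⟩ := Polynomial.natDegree_eq_zero.mp heq
        simp [hQ]
      · have hPne : P ≠ 0 := fun h => by simp [h] at heq; omega
        have hlc : (P.comp (X + C 1)).leadingCoeff = P.leadingCoeff := by
          rw [Polynomial.leadingCoeff_comp (by rw [Polynomial.natDegree_X_add_C]; omega),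
            Polynomial.leadingCoeff_X_add_C, one_pow, mul_one]
        have hcompne : P.comp (X + C 1) ≠ 0 := fun h => by
          rw [h, Polynomial.leadingCoeff_zero] at hlc
          exact hPne (Polynomial.leadingCoeff_eq_zero.mp hlc.symm)
        have hdeg : P.degree = (P.comp (X + C 1)).degree := by
          rw [Polynomial.degree_eq_natDegree hPne, Polynomial.degree_eq_natDegree hcompne,
            Polynomial.natDegree_comp, Polynomial.natDegree_X_add_C, mul_one]
        have hsub := Polynomial.degree_sub_lt hdeg hPne hlc.symm
        refine ih Q ?_
        by_cases hQ0 : Q = 0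
        · rw [hQ0]; simpa using hn
        · have := (Polynomial.natDegree_lt_iff_degree_lt hQ0).mpr
            (by rw [Polynomial.degree_eq_natDegree hPne] at hsub; exact_mod_cast hsub)
          omega

lemma negOnePow_sub_natCast (a : ℤ) (s : ℕ) :
    (((a - s).negOnePow : ℤˣ) : ℤ) = ((a.negOnePow : ℤˣ) : ℤ) * (-1)^s := by
  rw [sub_eq_add_neg, Int.negOnePow_add, Int.negOnePow_neg, Units.val_mul,
    Int.coe_negOnePow_natCast]

open Polynomial in
lemma vanish (m i : ℕ) (hm : 0 < m) (hi : m < i) :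
    ∑ k ∈ Finset.Icc (1 - (i:ℤ)) (i:ℤ),
      (k.negOnePow : ℤ) * k ^ (2*m-1) * ((2*i-1).choose ((i:ℤ) - k).toNat : ℤ) = 0 := by
  have hdeg : ((C (i:ℤ) - X)^(2*m-1) : Polynomial ℤ).natDegree = 2*m-1 := by
    rw [Polynomial.natDegree_pow, show (C (i:ℤ) - X) = -(X - C (i:ℤ)) by ring,
      Polynomial.natDegree_neg, Polynomial.natDegree_X_sub_C, mul_one]
  have h0 := alt_sum_poly (2*i-1) ((C (i:ℤ) - X)^(2*m-1)) (by omega)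
  rw [show 2*i-1+1 = 2*i by omega] at h0
  simp only [Polynomial.eval_pow, Polynomial.eval_sub, Polynomial.eval_C,
    Polynomial.eval_X] at h0
  have hre : ∑ k ∈ Finset.Icc (1 - (i:ℤ)) (i:ℤ),
      (k.negOnePow : ℤ) * k ^ (2*m-1) * ((2*i-1).choose ((i:ℤ) - k).toNat : ℤ)
      = ∑ s ∈ Finset.range (2*i),
        ((((i:ℤ) - s).negOnePow : ℤ) * ((i:ℤ)-s) ^ (2*m-1) * ((2*i-1).choose s : ℤ)) := by
    refine Finset.sum_nbij' (fun k => ((i:ℤ) - k).toNat) (fun s => (i:ℤ) - s)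
      ?_ ?_ ?_ ?_ ?_
    · intro k hk
      simp only [Finset.mem_Icc] at hk
      simp only [Finset.mem_range]
      omega
    · intro s hs
      simp only [Finset.mem_range] at hs
      simp only [Finset.mem_Icc]
      omega
    · intro k hk
      simp only [Finset.mem_Icc] at hk
      omega
    · intro s hs
      simp only [Finset.mem_range] at hs
      omega
    · intro k hk
      simp only [Finset.mem_Icc] at hk
      have e : ((((i:ℤ) - k).toNat : ℕ) : ℤ) = (i:ℤ) - k := by omega
      rw [e]
      have e2 : (i:ℤ) - ((i:ℤ) - k) = k := by ring
      rw [e2]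
  rw [hre]
  have step : ∀ s ∈ Finset.range (2*i),
      (((i:ℤ) - s).negOnePow : ℤ) * ((i:ℤ)-s) ^ (2*m-1) * ((2*i-1).choose s : ℤ)
      = ((i:ℤ).negOnePow : ℤ) *
        ((-1:ℤ)^s * ((2*i-1).choose s : ℤ) * ((i:ℤ)-s) ^ (2*m-1)) := by
    intro s _
    rw [show (i:ℤ) - s = ((i:ℤ) - s) from rfl, negOnePow_sub_natCast]
    ring
  rw [Finset.sum_congr rfl step, ← Finset.mul_sum, h0, mul_zero]

/- ### Finsupp layer -/

lemma sum_single_apply : ∀ (l : List Word) (w : Word),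
    ((l.map fun x => Finsupp.single x (1:ℤ)).sum) w = l.count w := by
  intro l
  induction l with
  | nil => intro w; simp
  | cons a l ih =>
    intro w
    simp only [List.map_cons, List.sum_cons, Finsupp.add_apply, ih, List.count_cons,
      Finsupp.single_apply]
    rcases eq_or_ne a w with rfl | h
    · simp [add_comm]
    · simp [h]

lemma wordShuffle_apply (u v w : Word) :
    wordShuffle u v w = ((listShuffles u v).count w : ℤ) := by
  rw [wordShuffle, sum_single_apply]

lemma T_apply (N j : ℕ) (hj : 2*j ≤ N) (w : Word) :
    T N j w = if (valid 0 w = true ∧ w.length = 2*N ∧ countAA w = j) then 1 else 0 := by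
  rw [T, Finsupp.finset_sum_apply]
  rw [Finset.sum_congr rfl (fun x _ => Finsupp.single_apply)]
  rw [Finset.sum_ite_eq' _ w (fun _ => (1:ℤ))]
  congr 1
  simp only [Finset.mem_filter, Finsupp.mem_support_iff, wordShuffle_apply, ne_eq,
    Nat.cast_eq_zero, ← ne_eq, (mainCount w j (N - j)).1, eq_iff_iff]
  constructor
  · rintro ⟨hne, hc⟩
    rw [fX] at hne
    split_ifs at hne with h
    · exact ⟨h.1, by omega, hc⟩
    · exact absurd rfl hne
  · rintro ⟨h1, h2, h3⟩
    refine ⟨?_, h3⟩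
    rw [fX, if_pos ⟨h1, by omega, by omega, by omega⟩, h3]
    simp

lemma fX_zero2 {w : Word} {p q : ℕ} (h : ¬(countAA w ≤ p ∧ countAA w ≤ q)) :
    fX w p q = 0 := by rw [fX, if_neg]; tauto


/-- For positive integers `n ≥ m`:
`∑_{k=1−n}^{n} (−1)^k k^(2m−1) ⬝ [(AB)^(n−k) ⧢ (AB)^(n−1+k)]
  = ∑_{j=1}^{m} 4^(n−j) ⬝ a_{2m−1,j} ⬝ T_{2n−1,n−j}`,
where `a_{2m−1,j} = ∑_{k=1−j}^{j} (−1)^k k^(2m−1) C(2j−1, j−k)`. -/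
theorem alternating_sum_ABpow_shuffle_odd (m n : ℕ) (hm : 0 < m) (hmn : m ≤ n) :
    ∑ k ∈ Finset.Icc (1 - (n : ℤ)) (n : ℤ),
      (((k.negOnePow : ℤ) * k ^ (2 * m - 1)) •
        wordShuffle (ABpow ((n : ℤ) - k).toNat) (ABpow ((n : ℤ) - 1 + k).toNat))
    = ∑ j ∈ Finset.Icc 1 m,
        ((4 ^ (n - j) *
          ∑ k ∈ Finset.Icc (1 - (j : ℤ)) (j : ℤ),
            (k.negOnePow : ℤ) * k ^ (2 * m - 1) *
              (Nat.choose (2 * j - 1) ((j : ℤ) - k).toNat : ℤ)) •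
          T (2 * n - 1) (n - j)) := by
  ext w
  rw [Finsupp.finset_sum_apply, Finsupp.finset_sum_apply]
  simp only [Finsupp.smul_apply, smul_eq_mul]
  have hTap : ∀ j ∈ Finset.Icc 1 m, T (2*n-1) (n-j) w =
      if (valid 0 w = true ∧ w.length = 2*(2*n-1) ∧ countAA w = n - j) then 1 else 0 := by
    intro j hj
    simp only [Finset.mem_Icc] at hj
    exact T_apply (2*n-1) (n-j) (by omega) w
  have hWap : ∀ k ∈ Finset.Icc (1 - (n:ℤ)) (n:ℤ),
      wordShuffle (ABpow ((n:ℤ)-k).toNat) (ABpow ((n:ℤ)-1+k).toNat) w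
      = (fX w ((n:ℤ)-k).toNat ((n:ℤ)-1+k).toNat : ℤ) := by
    intro k _
    rw [wordShuffle_apply, (mainCount w _ _).1]
  by_cases hw : valid 0 w = true ∧ w.length = 2*(2*n-1)
  case neg =>
    rw [Finset.sum_eq_zero, Finset.sum_eq_zero]
    · intro j hj
      rw [hTap j hj, if_neg (fun h => hw ⟨h.1, h.2.1⟩), mul_zero]
    · intro k hk
      rw [hWap k hk]
      simp only [Finset.mem_Icc] at hk
      rw [fX_zero (w := w) ?_, Nat.cast_zero, mul_zero]
      rintro ⟨h1, h2⟩
      exact hw ⟨h1, by omega⟩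
  case pos =>
    obtain ⟨hwv, hwl⟩ := hw
    by_cases hbig : n ≤ countAA w
    · rw [Finset.sum_eq_zero, Finset.sum_eq_zero]
      · intro j hj
        rw [hTap j hj]
        simp only [Finset.mem_Icc] at hj
        rw [if_neg, mul_zero]
        rintro ⟨-, -, h3⟩
        omega
      · intro k hk
        rw [hWap k hk]
        simp only [Finset.mem_Icc] at hk
        rw [fX_zero2 (w := w) (by omega), Nat.cast_zero, mul_zero]
    · push_neg at hbig
      set j0 := countAA w with hj0
      set i := n - j0 with hi
      have hi1 : 1 ≤ i := by omega
      have hin : i ≤ n := by omega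
      have hR : ∑ j ∈ Finset.Icc 1 m,
          (4 ^ (n - j) *
            ∑ k ∈ Finset.Icc (1 - (j : ℤ)) (j : ℤ),
              (k.negOnePow : ℤ) * k ^ (2 * m - 1) *
                (Nat.choose (2 * j - 1) ((j : ℤ) - k).toNat : ℤ)) *
            T (2*n-1) (n-j) w
          = if i ∈ Finset.Icc 1 m then
              (4 ^ (n - i) *
                ∑ k ∈ Finset.Icc (1 - (i : ℤ)) (i : ℤ),
                  (k.negOnePow : ℤ) * k ^ (2 * m - 1) *
                    (Nat.choose (2 * i - 1) ((i : ℤ) - k).toNat : ℤ)) else 0 := by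
        have hstep : ∀ j ∈ Finset.Icc 1 m,
            (4 ^ (n - j) *
              ∑ k ∈ Finset.Icc (1 - (j : ℤ)) (j : ℤ),
                (k.negOnePow : ℤ) * k ^ (2 * m - 1) *
                  (Nat.choose (2 * j - 1) ((j : ℤ) - k).toNat : ℤ)) *
              T (2*n-1) (n-j) w
            = if j = i then (4 ^ (n - j) *
              ∑ k ∈ Finset.Icc (1 - (j : ℤ)) (j : ℤ),
                (k.negOnePow : ℤ) * k ^ (2 * m - 1) *
                  (Nat.choose (2 * j - 1) ((j : ℤ) - k).toNat : ℤ)) else 0 := by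
          intro j hj
          rw [hTap j hj]
          simp only [Finset.mem_Icc] at hj
          by_cases h : j = i
          · subst h
            rw [if_pos ⟨hwv, hwl, by omega⟩, mul_one, if_pos rfl]
          · rw [if_neg (fun hc => h (by omega)), mul_zero, if_neg h]
        rw [Finset.sum_congr rfl hstep,
          Finset.sum_ite_eq' (Finset.Icc 1 m) i (fun j => 4 ^ (n - j) *
              ∑ k ∈ Finset.Icc (1 - (j : ℤ)) (j : ℤ),
                (k.negOnePow : ℤ) * k ^ (2 * m - 1) *
                  (Nat.choose (2 * j - 1) ((j : ℤ) - k).toNat : ℤ))]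
      rw [hR]
      have hsub : Finset.Icc (1 - (i:ℤ)) (i:ℤ) ⊆ Finset.Icc (1 - (n:ℤ)) (n:ℤ) := by
        intro k hk
        simp only [Finset.mem_Icc] at *
        omega
      rw [← Finset.sum_subset hsub (fun k hk hknot => by
        rw [hWap k hk]
        simp only [Finset.mem_Icc] at hk hknot
        rw [fX_zero2 (w := w) (by omega), Nat.cast_zero, mul_zero])]
      have hfx : ∀ k ∈ Finset.Icc (1-(i:ℤ)) (i:ℤ),
          (k.negOnePow : ℤ) * k ^ (2 * m - 1) *
            wordShuffle (ABpow ((n:ℤ)-k).toNat) (ABpow ((n:ℤ)-1+k).toNat) w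
          = (4:ℤ)^j0 * ((k.negOnePow : ℤ) * k ^ (2 * m - 1) *
              (Nat.choose (2 * i - 1) ((i:ℤ)-k).toNat : ℤ)) := by
        intro k hk
        rw [hWap k (hsub hk)]
        simp only [Finset.mem_Icc] at hk
        rw [fX, if_pos ⟨hwv, by omega, by omega, by omega⟩]
        have e1 : ((n:ℤ)-k).toNat + ((n:ℤ)-1+k).toNat - 2*j0 = 2*i-1 := by omega
        have e2 : ((n:ℤ)-k).toNat - j0 = ((i:ℤ)-k).toNat := by omega
        rw [← hj0, e1, e2]
        push_cast
        ring
      rw [Finset.sum_congr rfl hfx, ← Finset.mul_sum]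
      by_cases him : i ≤ m
      · rw [if_pos (Finset.mem_Icc.mpr ⟨hi1, him⟩), show n - i = j0 by omega]
      · rw [if_neg (fun hmem => him (Finset.mem_Icc.mp hmem).2)]
        rw [vanish m i hm (by omega), mul_zero]
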